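/- If a maximal repeat σ from PSP_k is generated by a maximal repetition r, then r coincides (as a factor of w, i.e., has the same start and end positions) with the periodic prefix of the copy of σ that is contained in r. -/
import Mathlib


open scoped Classical

namespace Gapped

variable {α : Type*}

/-- `p` is a period of the factor `w[i..j]` of the word `w` (positions are 1-indexed). -/
def IsPeriod (w : ℕ → α) (i j p : ℕ) : Prop :=
  0 < p ∧ ∀ t, i ≤ t → t + p ≤ j → w t = w (t + p)

/-- The minimal period `p(w[i..j])` of the factor `w[i..j]`. -/
noncomputable def minPer (w : ℕ → α) (i j : ℕ) : ℕ :=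
  sInf {p | IsPeriod w i j p}

/-- The length of the factor `w[i..j]`. -/
def flen (i j : ℕ) : ℕ := j - i + 1

/-- The exponent `e(w[i..j]) = |w[i..j]| / p(w[i..j])` of the factor `w[i..j]`. -/
noncomputable def expo (w : ℕ → α) (i j : ℕ) : ℝ :=
  (flen i j : ℝ) / (minPer w i j : ℝ)

/-- `w[i..j]` is a valid factor of a word of length `n`. -/
def IsFactor (n i j : ℕ) : Prop := 1 ≤ i ∧ i ≤ j ∧ j ≤ n

/-- `w[i..j]` is a repetition: a factor of exponent at least 2. -/
def IsRep (w : ℕ → α) (n i j : ℕ) : Prop :=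
  IsFactor n i j ∧ 2 * minPer w i j ≤ flen i j

/-- `w[i..j]` is a maximal repetition in the word `w` of length `n`. -/
def MaxRep (w : ℕ → α) (n i j : ℕ) : Prop :=
  IsRep w n i j ∧
  (1 < i → w (i - 1) ≠ w (i - 1 + minPer w i j)) ∧
  (j < n → w (j + 1 - minPer w i j) ≠ w (j + 1))

/-- `w[i..j]` is a δ-subrepetition: `1 + δ ≤ e(w[i..j]) < 2`. -/
def IsSubrep (w : ℕ → α) (n : ℕ) (δ : ℝ) (i j : ℕ) : Prop :=
  IsFactor n i j ∧ 1 + δ ≤ expo w i j ∧ expo w i j < 2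

/-- `w[i..j]` is a maximal δ-subrepetition in the word `w` of length `n`. -/
def MaxSubrep (w : ℕ → α) (n : ℕ) (δ : ℝ) (i j : ℕ) : Prop :=
  IsSubrep w n δ i j ∧
  (1 < i → w (i - 1) ≠ w (i - 1 + minPer w i j)) ∧
  (j < n → w (j + 1 - minPer w i j) ≠ w (j + 1))

/-- `w[i..j]` is a maximal subrepetition (a maximal δ-subrepetition for some 0 < δ < 1). -/
def MaxSubrepAny (w : ℕ → α) (n i j : ℕ) : Prop :=
  ∃ δ : ℝ, 0 < δ ∧ δ < 1 ∧ MaxSubrep w n δ i j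

/-- Gapped repeat `(i1, j1, p)`: left copy `w[i1..j1]`, period `p`, right copy
`w[i1+p..j1+p]`; both copies are equal and the gap `w[j1+1..i1+p-1]` is nonempty
(`c(σ) = flen i1 j1 < p`). -/
def IsGapped (w : ℕ → α) (n i1 j1 p : ℕ) : Prop :=
  1 ≤ i1 ∧ i1 ≤ j1 ∧ flen i1 j1 < p ∧ j1 + p ≤ n ∧
  ∀ t, i1 ≤ t → t ≤ j1 → w t = w (t + p)

/-- Maximal gapped repeat: the copies cannot be extended to the left or right
with preserving the period. -/
def MaxGapped (w : ℕ → α) (n i1 j1 p : ℕ) : Prop :=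
  IsGapped w n i1 j1 p ∧
  (1 < i1 → w (i1 - 1) ≠ w (i1 - 1 + p)) ∧
  (j1 + p < n → w (j1 + 1) ≠ w (j1 + 1 + p))

/-- The gapped repeat `(i1, j1, p)` is `a`-gapped: `p(σ) ≤ a · c(σ)`. -/
def AlphaGapped (a : ℝ) (i1 j1 p : ℕ) : Prop :=
  (p : ℝ) ≤ a * (flen i1 j1 : ℝ)

/-- Maximal `a`-gapped repeat. -/
def MaxAlphaGapped (w : ℕ → α) (n : ℕ) (a : ℝ) (i1 j1 p : ℕ) : Prop :=
  MaxGapped w n i1 j1 p ∧ AlphaGapped a i1 j1 p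

/-- `w[I..J]` is the extension of the repetition `w[i..j]`: the maximal repetition
containing it with the same minimal period. -/
def IsExtension (w : ℕ → α) (n i j I J : ℕ) : Prop :=
  MaxRep w n I J ∧ I ≤ i ∧ j ≤ J ∧ minPer w I J = minPer w i j

/-- The gapped repeat `(i1, j1, p)` is periodic: both copies are repetitions. -/
def PeriodicGapped (w : ℕ → α) (n i1 j1 p : ℕ) : Prop :=
  IsRep w n i1 j1 ∧ IsRep w n (i1 + p) (j1 + p)

/-- The maximal gapped repeat `(i1, j1, p)` is a private repeat generated by the
maximal repetition `w[I..J]`: it is periodic and `w[I..J]` is the common extension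
of both copies. -/
def PrivateGenBy (w : ℕ → α) (n i1 j1 p I J : ℕ) : Prop :=
  MaxGapped w n i1 j1 p ∧ PeriodicGapped w n i1 j1 p ∧
  IsExtension w n i1 j1 I J ∧ IsExtension w n (i1 + p) (j1 + p) I J

/-- The maximal gapped repeat `(i1, j1, p)` is private. -/
def IsPrivate (w : ℕ → α) (n i1 j1 p : ℕ) : Prop :=
  ∃ I J, PrivateGenBy w n i1 j1 p I J

/-- `m` is a periodic-prefix length for the copy `w[i..j]`: the prefix of length `m`
is a repetition whose length is at least half of the copy length. -/
def PerPrefix (w : ℕ → α) (n i j m : ℕ) : Prop :=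
  1 ≤ m ∧ m ≤ flen i j ∧ IsRep w n i (i + m - 1) ∧ flen i j ≤ 2 * m

/-- `m` is a periodic-suffix length for the copy `w[i..j]`. -/
def PerSuffix (w : ℕ → α) (n i j m : ℕ) : Prop :=
  1 ≤ m ∧ m ≤ flen i j ∧ IsRep w n (j + 1 - m) j ∧ flen i j ≤ 2 * m

/-- `m` is the length of the periodic prefix (the longest prefix which is a repetition
of length at least half the copy length) of the copy `w[i..j]`. -/
def LongestPerPrefix (w : ℕ → α) (n i j m : ℕ) : Prop :=
  PerPrefix w n i j m ∧ ∀ m', PerPrefix w n i j m' → m' ≤ m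

/-- The gapped repeat `(i1, j1, p)` is prefix semiperiodic. -/
def PrefixSemi (w : ℕ → α) (n i1 j1 p : ℕ) : Prop :=
  ¬ IsRep w n i1 j1 ∧ ¬ IsRep w n (i1 + p) (j1 + p) ∧
  (∃ m, PerPrefix w n i1 j1 m) ∧ (∃ m, PerPrefix w n (i1 + p) (j1 + p) m)

/-- The gapped repeat `(i1, j1, p)` is suffix semiperiodic. -/
def SuffixSemi (w : ℕ → α) (n i1 j1 p : ℕ) : Prop :=
  ¬ IsRep w n i1 j1 ∧ ¬ IsRep w n (i1 + p) (j1 + p) ∧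
  (∃ m, PerSuffix w n i1 j1 m) ∧ (∃ m, PerSuffix w n (i1 + p) (j1 + p) m)

/-- The gapped repeat `(i1, j1, p)` is ordinary: neither periodic nor semiperiodic. -/
def Ordinary (w : ℕ → α) (n i1 j1 p : ℕ) : Prop :=
  ¬ PeriodicGapped w n i1 j1 p ∧ ¬ PrefixSemi w n i1 j1 p ∧ ¬ SuffixSemi w n i1 j1 p

/-- `(i1, j1, p)` belongs to `PSP_k`: it is a prefix semiperiodic maximal `k`-gapped repeat. -/
def InPSP (w : ℕ → α) (n k i1 j1 p : ℕ) : Prop :=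
  MaxGapped w n i1 j1 p ∧ AlphaGapped (k : ℝ) i1 j1 p ∧ PrefixSemi w n i1 j1 p

/-- The repeat `(i1, j1, p) ∈ PSP_k` is generated from the left by `w[I1..J1]` per
`w[I2..J2]`: these are the extensions of the periodic prefixes of the left and right
copies respectively, and `|w[I1..J1]| ≤ |w[I2..J2]|`. -/
def GenFromLeft (w : ℕ → α) (n k i1 j1 p I1 J1 I2 J2 : ℕ) : Prop :=
  InPSP w n k i1 j1 p ∧
  ∃ m, LongestPerPrefix w n i1 j1 m ∧ LongestPerPrefix w n (i1 + p) (j1 + p) m ∧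
    IsExtension w n i1 (i1 + m - 1) I1 J1 ∧
    IsExtension w n (i1 + p) (i1 + p + m - 1) I2 J2 ∧
    flen I1 J1 ≤ flen I2 J2

/-- The maximal repetition `w[I2..J2]` is left associated with the maximal repetition
`w[I1..J1]`: some repeat from `PSP_k` is generated from the left by `w[I1..J1]` per
`w[I2..J2]`. -/
def LeftAssociated (w : ℕ → α) (n k I1 J1 I2 J2 : ℕ) : Prop :=
  ∃ i1 j1 p, GenFromLeft w n k i1 j1 p I1 J1 I2 J2

/-- The periodic maximal `k`-gapped repeat `(i1, j1, p)` is non-private and is generated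
from the left by the maximal repetition `w[I..J]`: `w[I..J]` is the extension of the
left copy, the extension of the right copy is a different maximal repetition which is
not shorter. -/
def GenFromLeftPeriodic (w : ℕ → α) (n k i1 j1 p I J : ℕ) : Prop :=
  MaxGapped w n i1 j1 p ∧ AlphaGapped (k : ℝ) i1 j1 p ∧ PeriodicGapped w n i1 j1 p ∧
  IsExtension w n i1 j1 I J ∧
  ∃ I' J', IsExtension w n (i1 + p) (j1 + p) I' J' ∧ (I', J') ≠ (I, J) ∧
    flen I J ≤ flen I' J'

/-- `(i1, j1, p)` belongs to `OP_k`: it is an ordinary maximal `k`-gapped repeat. -/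
def InOP (w : ℕ → α) (n k i1 j1 p : ℕ) : Prop :=
  MaxGapped w n i1 j1 p ∧ AlphaGapped (k : ℝ) i1 j1 p ∧ Ordinary w n i1 j1 p

/-- The point `(j', p')` covers the point `(j'', p'')`. -/
def Covers (k : ℕ) (j' p' j'' p'' : ℕ) : Prop :=
  (p' : ℝ) - (p' : ℝ) / (4 * k) ≤ (p'' : ℝ) ∧ (p'' : ℝ) ≤ (p' : ℝ) ∧
  (j' : ℝ) - (p' : ℝ) / (3 * k) ≤ (j'' : ℝ) ∧ (j'' : ℝ) ≤ (j' : ℝ)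

/-- The maximal gapped repeat `(i1, j1, p)` is principal: it is the respective repeat
of some maximal subrepetition (which then spans `w[i1..j1+p]` and has minimal period `p`). -/
def Principal (w : ℕ → α) (n i1 j1 p : ℕ) : Prop :=
  ∃ δ : ℝ, 0 < δ ∧ δ < 1 ∧ MaxSubrep w n δ i1 (j1 + p) ∧ minPer w i1 (j1 + p) = p

/-- The gapped repeat `(i1, j1, p)` is stretched by the maximal repetition `w[I..J]`. -/
def StretchedByRep (w : ℕ → α) (n i1 j1 p I J : ℕ) : Prop :=
  MaxRep w n I J ∧ I ≤ i1 ∧ j1 + p ≤ J ∧ minPer w I J < p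

/-- The gapped repeat `(i1, j1, p)` is stretched by the maximal subrepetition `w[I..J]`. -/
def StretchedBySub (w : ℕ → α) (n i1 j1 p I J : ℕ) : Prop :=
  MaxSubrepAny w n I J ∧ I ≤ i1 ∧ j1 + p ≤ J ∧ minPer w I J < p

/-- The gapped repeat `(i1, j1, p)` is stretchable. -/
def Stretchable (w : ℕ → α) (n i1 j1 p : ℕ) : Prop :=
  ∃ I J, StretchedByRep w n i1 j1 p I J ∨ StretchedBySub w n i1 j1 p I J

/-- `u` (with letters at positions `1..m`) is a primitive word of length `m`:
its exponent is not an integer greater than 1. -/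
def Primitive (u : ℕ → α) (m : ℕ) : Prop :=
  ¬ (minPer u 1 m ∣ m ∧ minPer u 1 m < m)

/-- There is an occurrence of the square `uu` (where `|u| = m`) at position `i` in the
word `w` of length `n`. -/
def OccSquare (w : ℕ → α) (n : ℕ) (u : ℕ → α) (m i : ℕ) : Prop :=
  1 ≤ i ∧ i + 2 * m - 1 ≤ n ∧
  ∀ t, 1 ≤ t → t ≤ m → w (i + t - 1) = u t ∧ w (i + m + t - 1) = u t

/-- `E(w)`: the sum of exponents of all maximal repetitions in the word `w` of length `n`. -/
noncomputable def Ew (w : ℕ → α) (n : ℕ) : ℝ :=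
  ∑ r ∈ (Finset.Icc 1 n ×ˢ Finset.Icc 1 n).filter (fun r => MaxRep w n r.1 r.2),
    expo w r.1 r.2

lemma isPeriod_flen (w : ℕ → α) (i j : ℕ) : IsPeriod w i j (j - i + 1) :=
  ⟨by omega, fun t ht1 ht2 => absurd ht2 (by omega)⟩

lemma minPer_isPeriod (w : ℕ → α) (i j : ℕ) : IsPeriod w i j (minPer w i j) := by
  have hne : {p | IsPeriod w i j p}.Nonempty := ⟨j - i + 1, isPeriod_flen w i j⟩
  exact Nat.sInf_mem hne

lemma minPer_le {w : ℕ → α} {i j q : ℕ} (h : IsPeriod w i j q) : minPer w i j ≤ q :=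
  Nat.sInf_le h

lemma isPeriod_mono {w : ℕ → α} {I J i j q : ℕ} (h : IsPeriod w I J q)
    (hI : I ≤ i) (hJ : j ≤ J) : IsPeriod w i j q :=
  ⟨h.1, fun t ht1 ht2 => h.2 t (le_trans hI ht1) (le_trans ht2 hJ)⟩

lemma isPeriod_shift {w : ℕ → α} {i1 j1 p b q : ℕ}
    (hper : ∀ t, i1 ≤ t → t ≤ j1 → w t = w (t + p))
    (hb1 : i1 ≤ b) (hb2 : b ≤ j1) :
    IsPeriod w i1 b q ↔ IsPeriod w (i1 + p) (b + p) q := by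
  constructor
  · rintro ⟨hq, h⟩
    refine ⟨hq, fun t ht1 ht2 => ?_⟩
    obtain ⟨s, rfl⟩ : ∃ s, t = s + p := ⟨t - p, by omega⟩
    have h1 : w s = w (s + p) := hper s (by omega) (by omega)
    have h2 : w s = w (s + q) := h s (by omega) (by omega)
    have h3 : w (s + q) = w (s + q + p) := hper (s + q) (by omega) (by omega)
    calc w (s + p) = w s := h1.symm
      _ = w (s + q) := h2
      _ = w (s + q + p) := h3
      _ = w (s + p + q) := by rw [show s + q + p = s + p + q from by omega]
  · rintro ⟨hq, h⟩
    refine ⟨hq, fun t ht1 ht2 => ?_⟩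
    have h1 : w t = w (t + p) := hper t (by omega) (by omega)
    have h2 : w (t + p) = w (t + p + q) := h (t + p) (by omega) (by omega)
    have h3 : w (t + q) = w (t + q + p) := hper (t + q) (by omega) (by omega)
    calc w t = w (t + p + q) := h1.trans h2
      _ = w (t + q + p) := by rw [show t + p + q = t + q + p from by omega]
      _ = w (t + q) := h3.symm

/-- If a maximal repeat from `PSP_k` is generated by a maximal repetition `r`, then `r`
coincides with the periodic prefix of the copy of the repeat contained in `r`. -/
theorem generating_repetition_eq_periodic_prefix (w : ℕ → α) (n k : ℕ) (hk : 2 ≤ k)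
    (i1 j1 p m I1 J1 I2 J2 : ℕ)
    (hσ : InPSP w n k i1 j1 p)
    (hm : LongestPerPrefix w n i1 j1 m)
    (hm' : LongestPerPrefix w n (i1 + p) (j1 + p) m)
    (hext1 : IsExtension w n i1 (i1 + m - 1) I1 J1)
    (hext2 : IsExtension w n (i1 + p) (i1 + p + m - 1) I2 J2) :
    (flen I1 J1 ≤ flen I2 J2 → I1 = i1 ∧ J1 = i1 + m - 1) ∧
    (flen I2 J2 < flen I1 J1 → I2 = i1 + p ∧ J2 = i1 + p + m - 1) := by
  obtain ⟨hmax, halpha, hps⟩ := hσ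
  obtain ⟨⟨h1i1, hi1j1, hflt, hjpn, hper⟩, hleftmax, _⟩ := hmax
  obtain ⟨hnr1, hnr2, -, -⟩ := hps
  obtain ⟨⟨hm1, hmle, hrep1, hhalf1⟩, hmmax⟩ := hm
  obtain ⟨⟨hm1', hmle', hrep2, hhalf2⟩, hmmax'⟩ := hm'
  obtain ⟨hMR1, hI1le, hJ1ge, hq1⟩ := hext1
  obtain ⟨hMR2, hI2le, hJ2ge, hq2⟩ := hext2
  simp only [flen] at hmle hmle' hhalf1 hhalf2 hflt
  have hj1n : j1 ≤ n := by omega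
  have h1I1 : 1 ≤ I1 := hMR1.1.1.1
  have h1I2 : 1 ≤ I2 := hMR2.1.1.1
  -- the periodic prefix is a proper prefix of the copy
  have hmlt : m < j1 - i1 + 1 := by
    rcases lt_or_eq_of_le hmle with h | h
    · exact h
    · exfalso
      apply hnr1
      have e : i1 + m - 1 = j1 := by omega
      rwa [e] at hrep1
  set q : ℕ := minPer w i1 (i1 + m - 1) with hq
  have hqper : IsPeriod w i1 (i1 + m - 1) q := minPer_isPeriod w _ _
  have hqpos : 0 < q := hqper.1
  have h2q : 2 * q ≤ m := by
    have := hrep1.2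
    simp only [flen] at this
    omega
  -- the extension of the left periodic prefix does not extend to the right
  have hJ1 : J1 = i1 + m - 1 := by
    by_contra hne
    have hJ1' : i1 + m ≤ J1 := by omega
    have hpq : IsPeriod w i1 (i1 + m) (minPer w I1 J1) :=
      isPeriod_mono (minPer_isPeriod w I1 J1) hI1le hJ1'
    have hle : minPer w i1 (i1 + m) ≤ q := hq1 ▸ minPer_le hpq
    have hpp : PerPrefix w n i1 j1 (m + 1) := by
      refine ⟨by omega, ?_, ?_, ?_⟩
      · show m + 1 ≤ j1 - i1 + 1; omega
      · have e : i1 + (m + 1) - 1 = i1 + m := by omega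
        rw [e]
        refine ⟨⟨h1i1, by omega, by omega⟩, ?_⟩
        show 2 * minPer w i1 (i1 + m) ≤ i1 + m - i1 + 1
        omega
      · show j1 - i1 + 1 ≤ 2 * (m + 1); omega
    have := hmmax (m + 1) hpp
    omega
  -- the extension of the right periodic prefix does not extend to the right
  have hJ2 : J2 = i1 + p + m - 1 := by
    by_contra hne
    have hJ2' : i1 + p + m ≤ J2 := by omega
    have hpq : IsPeriod w (i1 + p) (i1 + p + m) (minPer w I2 J2) :=
      isPeriod_mono (minPer_isPeriod w I2 J2) hI2le hJ2'
    have hle : minPer w (i1 + p) (i1 + p + m) ≤ minPer w (i1 + p) (i1 + p + m - 1) :=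
      hq2 ▸ minPer_le hpq
    have h2q' : 2 * minPer w (i1 + p) (i1 + p + m - 1) ≤ m := by
      have := hrep2.2
      simp only [flen] at this
      omega
    have hpp : PerPrefix w n (i1 + p) (j1 + p) (m + 1) := by
      refine ⟨by omega, ?_, ?_, ?_⟩
      · show m + 1 ≤ j1 + p - (i1 + p) + 1; omega
      · have e : i1 + p + (m + 1) - 1 = i1 + p + m := by omega
        rw [e]
        refine ⟨⟨by omega, by omega, by omega⟩, ?_⟩
        show 2 * minPer w (i1 + p) (i1 + p + m) ≤ i1 + p + m - (i1 + p) + 1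
        omega
      · show j1 + p - (i1 + p) + 1 ≤ 2 * (m + 1); omega
    have := hmmax' (m + 1) hpp
    omega
  -- both copies' periodic prefixes have the same minimal period
  have hkey : ∀ r, IsPeriod w i1 (i1 + m - 1) r ↔ IsPeriod w (i1 + p) (i1 + p + m - 1) r := by
    intro r
    have e : i1 + m - 1 + p = i1 + p + m - 1 := by omega
    rw [← e]
    exact isPeriod_shift hper (by omega) (by omega)
  have hmpeq : minPer w (i1 + p) (i1 + p + m - 1) = q := by
    rw [hq]
    unfold minPer
    exact congrArg sInf (Set.ext fun r => (hkey r).symm)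
  -- if both extensions extend to the left, the repeat is not maximal
  have hcontra : I1 ≤ i1 - 1 → I2 ≤ i1 + p - 1 → False := by
    intro hA hB
    have hi1 : 2 ≤ i1 := by omega
    have hP1 : IsPeriod w I1 J1 q := hq1 ▸ minPer_isPeriod w I1 J1
    have hP2 : IsPeriod w I2 J2 q := by
      have := minPer_isPeriod w I2 J2
      rwa [hq2, hmpeq] at this
    have e1 : w (i1 - 1) = w (i1 - 1 + q) := hP1.2 (i1 - 1) (by omega) (by omega)
    have e2 : w (i1 - 1 + q) = w (i1 - 1 + q + p) := hper (i1 - 1 + q) (by omega) (by omega)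
    have e3 : w (i1 - 1 + p) = w (i1 - 1 + p + q) := hP2.2 (i1 - 1 + p) (by omega) (by omega)
    have : w (i1 - 1) = w (i1 - 1 + p) := by
      rw [e1, e2, show i1 - 1 + q + p = i1 - 1 + p + q from by omega, ← e3]
    exact hleftmax hi1 this
  constructor
  · intro hlen
    simp only [flen] at hlen
    refine ⟨?_, hJ1⟩
    by_contra hne
    exact hcontra (by omega) (by omega)
  · intro hlen
    simp only [flen] at hlen
    refine ⟨?_, hJ2⟩
    by_contra hne
    exact hcontra (by omega) (by omega)

end Gapped
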